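/- arXiv:math/0505120 — 3 statements merged into one kernel-verified Lean document; each statement's English description precedes it below -/
import Mathlib

section
/- Let ω be a nonnegative Borel measure on ℝ with ∫_ℝ dω(λ)/(1+λ²) < ∞ and m(z) = c + dz + ∫_ℝ dω(λ)[1/(λ-z) - λ/(1+λ²)] for z ∈ ℂ₊ with c ∈ ℝ, d ≥ 0. Then for all λ₁ < λ₂ in ℝ, ω((λ₁,λ₂]) = lim_{δ↓0} lim_{ε↓0} (1/π) ∫_{λ₁+δ}^{λ₂+δ} Im(m(λ + iε)) dλ (Stieltjes inversion formula). -/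
/-!
For `z = x + iε` the Nevanlinna representation gives
`Im m(z) = d ε + ∫ ε / ((l - x)² + ε²) dω(l)`. Integrating over `x ∈ [a, b]` and exchanging the
integrals turns the Poisson kernel into `arctan ((b - l) / ε) - arctan ((a - l) / ε)`, which tends
to `(π / 2) (sign (b - l) - sign (a - l)) = π (𝟙_(a,b) + 𝟙_[a,b]) (l) / 2` as `ε ↓ 0`. It is bounded
by `π` near `[a, b]` and by a multiple of `1 / (1 + l²)` away from it, so dominated convergence
gives the inner limit `(ω (a, b) + ω [a, b]) / 2`. For `a = λ₁ + δ`, `b = λ₂ + δ` both sets lie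
between `(λ₁ + δ, λ₂]` and `(λ₁, λ₂ + δ]`, whose measures tend to `ω (λ₁, λ₂]` as `δ ↓ 0`.
-/

open MeasureTheory Filter Set Real Topology

lemma continuous_poisson_kernel {ε : ℝ} (hε : 0 < ε) (l : ℝ) :
    Continuous fun x => ε / ((l - x) ^ 2 + ε ^ 2) :=
  continuous_const.div (by fun_prop) fun x => by positivity

lemma integral_poisson_kernel {ε : ℝ} (hε : 0 < ε) (l a b : ℝ) :
    ∫ x in a..b, ε / ((l - x) ^ 2 + ε ^ 2) = arctan ((b - l) / ε) - arctan ((a - l) / ε) := by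
  have hderiv : ∀ x, HasDerivAt (fun x => arctan ((x - l) / ε)) (ε / ((l - x) ^ 2 + ε ^ 2)) x := by
    intro x
    refine (((hasDerivAt_id' x).sub_const l).div_const ε).arctan.congr_deriv ?_
    field_simp
    ring
  exact intervalIntegral.integral_eq_sub_of_hasDerivAt (fun x _ => hderiv x)
    ((continuous_poisson_kernel hε l).intervalIntegrable a b)

lemma one_add_sq_le (l x : ℝ) : 1 + l ^ 2 ≤ 2 * (l - x) ^ 2 + (1 + 2 * x ^ 2) := by
  nlinarith [sq_nonneg (l - 2 * x)]

lemma poisson_kernel_le {ε M x : ℝ} (hε : 0 < ε) (hx : x ^ 2 ≤ M) (l : ℝ) :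
    ε / ((l - x) ^ 2 + ε ^ 2) ≤ (2 * ε ^ 2 + 1 + 2 * M) / ε * (1 / (1 + l ^ 2)) := by
  rw [div_mul_div_comm, mul_one, div_le_div_iff₀ (by positivity) (by positivity)]
  nlinarith [one_add_sq_le l x, sq_nonneg (l - x), sq_nonneg ε, mul_pos hε hε]

lemma poisson_kernel_le_of_one_le_abs {ε M x l : ℝ} (hε : 0 < ε) (hx : x ^ 2 ≤ M)
    (hl : 1 ≤ |l - x|) :
    ε / ((l - x) ^ 2 + ε ^ 2) ≤ ε * (3 + 2 * M) * (1 / (1 + l ^ 2)) := by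
  have h1 : 1 ≤ (l - x) ^ 2 := by nlinarith [sq_abs (l - x)]
  have h2 : 1 + l ^ 2 ≤ (3 + 2 * M) * (l - x) ^ 2 := by
    nlinarith [one_add_sq_le l x, mul_le_mul_of_nonneg_left h1 (by positivity : 0 ≤ 1 + 2 * x ^ 2)]
  rw [mul_one_div, div_le_div_iff₀ (by positivity) (by positivity)]
  nlinarith [mul_le_mul_of_nonneg_left h2 hε.le, mul_pos hε (mul_pos hε hε)]

lemma sq_le_add_sq_of_mem_uIcc {a b x : ℝ} (hx : x ∈ uIcc a b) : x ^ 2 ≤ a ^ 2 + b ^ 2 := by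
  rcases le_total a b with h | h <;> simp only [uIcc_of_le, uIcc_of_ge, h, mem_Icc] at hx <;>
    rcases le_total 0 x with hx0 | hx0 <;> nlinarith

lemma tendsto_arctan_div_nhdsGT_zero (c : ℝ) :
    Tendsto (fun ε => arctan (c / ε)) (𝓝[>] 0) (𝓝 (π / 2 * Real.sign c)) := by
  rcases lt_trichotomy c 0 with hc | rfl | hc
  · rw [Real.sign_of_neg hc, mul_neg_one]
    exact (tendsto_arctan_atBot.mono_right nhdsWithin_le_nhds).comp
      (tendsto_inv_nhdsGT_zero.const_mul_atTop_of_neg hc)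
  · simp
  · rw [Real.sign_of_pos hc, mul_one]
    exact (tendsto_arctan_atTop.mono_right nhdsWithin_le_nhds).comp
      (tendsto_inv_nhdsGT_zero.const_mul_atTop hc)

lemma sign_sub_sub_sign_sub {a b : ℝ} (hab : a < b) (l : ℝ) :
    Real.sign (b - l) - Real.sign (a - l) =
      (Ioo a b).indicator 1 l + (Icc a b).indicator 1 l := by
  simp only [Real.sign, indicator_apply, mem_Ioo, mem_Icc, Pi.one_apply]
  split_ifs <;> grind

lemma arctan_sub_arctan_le_of_notMem_Icc {ε a b l : ℝ} (hε : 0 < ε) (hε1 : ε ≤ 1) (hab : a ≤ b)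
    (hl : l ∉ Icc (a - 1) (b + 1)) :
    arctan ((b - l) / ε) - arctan ((a - l) / ε) ≤
      (b - a) * ((3 + 2 * (a ^ 2 + b ^ 2)) * (1 / (1 + l ^ 2))) := by
  rw [← integral_poisson_kernel hε, ← smul_eq_mul, ← intervalIntegral.integral_const]
  refine intervalIntegral.integral_mono_on hab ((continuous_poisson_kernel hε l).intervalIntegrable
    a b) intervalIntegrable_const fun x hx => ?_
  have hlx : 1 ≤ |l - x| := by
    simp only [mem_Icc, not_and_or, not_le] at hl
    rcases hl with hl | hl
    · exact le_abs.2 (Or.inr (by linarith [hx.1]))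
    · exact le_abs.2 (Or.inl (by linarith [hx.2]))
  calc ε / ((l - x) ^ 2 + ε ^ 2)
      ≤ ε * (3 + 2 * (a ^ 2 + b ^ 2)) * (1 / (1 + l ^ 2)) :=
        poisson_kernel_le_of_one_le_abs hε (sq_le_add_sq_of_mem_uIcc (Icc_subset_uIcc hx)) hlx
    _ ≤ (3 + 2 * (a ^ 2 + b ^ 2)) * (1 / (1 + l ^ 2)) := by
        gcongr
        exact mul_le_of_le_one_left (by positivity) hε1

lemma isFiniteMeasureOnCompacts_of_integrable {ω : Measure ℝ}
    (hω : Integrable (fun l : ℝ => 1 / (1 + l ^ 2)) ω) : IsFiniteMeasureOnCompacts ω := by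
  refine ⟨fun K hK => ?_⟩
  obtain ⟨R, hR⟩ := hK.isBounded.subset_closedBall 0
  refine (measure_mono fun l hl => ?_).trans_lt (hω.measure_ge_lt_top (ε := 1 / (1 + R ^ 2))
    (by positivity))
  have hlR : |l| ≤ R := by simpa using hR hl
  have hsq : l ^ 2 ≤ R ^ 2 := sq_le_sq' (by linarith [neg_abs_le l]) ((le_abs_self l).trans hlR)
  change 1 / (1 + R ^ 2) ≤ 1 / (1 + l ^ 2)
  gcongr

lemma integrable_poisson_kernel_prod {ω : Measure ℝ} [SFinite ω]
    (hω : Integrable (fun l : ℝ => 1 / (1 + l ^ 2)) ω) {ε : ℝ} (hε : 0 < ε) (a b : ℝ) :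
    Integrable (Function.uncurry fun x l : ℝ => ε / ((l - x) ^ 2 + ε ^ 2))
      ((volume.restrict (uIoc a b)).prod ω) := by
  have : IsFiniteMeasure (volume.restrict (uIoc a b)) :=
    isFiniteMeasure_restrict.2 (by simp [Real.volume_uIoc])
  refine ((hω.const_mul ((2 * ε ^ 2 + 1 + 2 * (a ^ 2 + b ^ 2)) / ε)).comp_snd _).mono'
    (Measurable.aestronglyMeasurable (by fun_prop)) ?_
  rw [Measure.restrict_prod_eq_prod_univ]
  filter_upwards [ae_restrict_mem (measurableSet_uIoc.prod MeasurableSet.univ)]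
    with ⟨x, l⟩ ⟨hx, _⟩
  rw [Function.uncurry_apply_pair, Real.norm_of_nonneg (by positivity)]
  exact poisson_kernel_le hε (sq_le_add_sq_of_mem_uIcc (uIoc_subset_uIcc hx)) l

lemma integrable_indicator_one {α : Type*} [MeasurableSpace α] {μ : Measure α} {s : Set α}
    (hs : MeasurableSet s) (hμs : μ s ≠ ⊤) : Integrable (s.indicator (1 : α → ℝ)) μ :=
  (integrableOn_const hμs).integrable_indicator hs

lemma integral_sign_sub_sub_sign_sub {ω : Measure ℝ} [IsFiniteMeasureOnCompacts ω] {a b : ℝ}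
    (hab : a < b) :
    ∫ l, (Real.sign (b - l) - Real.sign (a - l)) ∂ω = ω.real (Ioo a b) + ω.real (Icc a b) := by
  simp_rw [sign_sub_sub_sign_sub hab]
  rw [integral_add (integrable_indicator_one measurableSet_Ioo measure_Ioo_lt_top.ne)
    (integrable_indicator_one measurableSet_Icc measure_Icc_lt_top.ne),
    integral_indicator_one measurableSet_Ioo, integral_indicator_one measurableSet_Icc]

lemma tendsto_integral_arctan_sub_arctan {ω : Measure ℝ}
    (hω : Integrable (fun l : ℝ => 1 / (1 + l ^ 2)) ω) {a b : ℝ} (hab : a < b) :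
    Tendsto (fun ε => ∫ l, (arctan ((b - l) / ε) - arctan ((a - l) / ε)) ∂ω) (𝓝[>] 0)
      (𝓝 (π / 2 * (ω.real (Ioo a b) + ω.real (Icc a b)))) := by
  have := isFiniteMeasureOnCompacts_of_integrable hω
  rw [← integral_sign_sub_sub_sign_sub hab, ← integral_const_mul]
  have hsmall : ∀ᶠ ε in 𝓝[>] (0 : ℝ), ε ∈ Ioc 0 1 := Ioc_mem_nhdsGT zero_lt_one
  refine tendsto_integral_filter_of_dominated_convergence
    (fun l => π * (Icc (a - 1) (b + 1)).indicator 1 l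
      + (b - a) * ((3 + 2 * (a ^ 2 + b ^ 2)) * (1 / (1 + l ^ 2))))
    (Eventually.of_forall fun ε => by fun_prop) ?_
    (((integrable_indicator_one measurableSet_Icc measure_Icc_lt_top.ne).const_mul π).add
      ((hω.const_mul _).const_mul _))
    (Eventually.of_forall fun l => ?_)
  · filter_upwards [hsmall] with ε ⟨hε, hε1⟩
    refine Eventually.of_forall fun l => ?_
    have hmono : arctan ((a - l) / ε) ≤ arctan ((b - l) / ε) :=
      arctan_strictMono.monotone (by gcongr)
    rw [Real.norm_of_nonneg (sub_nonneg.2 hmono)]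
    by_cases hl : l ∈ Icc (a - 1) (b + 1)
    · have : arctan ((b - l) / ε) - arctan ((a - l) / ε) ≤ π := by
        linarith [arctan_lt_pi_div_two ((b - l) / ε), neg_pi_div_two_lt_arctan ((a - l) / ε)]
      rw [indicator_of_mem hl, Pi.one_apply, mul_one]
      have : 0 ≤ (b - a) * ((3 + 2 * (a ^ 2 + b ^ 2)) * (1 / (1 + l ^ 2))) := by
        have := hab.le; positivity
      linarith
    · rw [indicator_of_notMem hl, mul_zero, zero_add]
      exact arctan_sub_arctan_le_of_notMem_Icc hε hε1 hab.le hl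
  · rw [mul_sub]
    exact (tendsto_arctan_div_nhdsGT_zero _).sub (tendsto_arctan_div_nhdsGT_zero _)

lemma ofReal_sub_ne_zero {z : ℂ} (hz : 0 < z.im) (l : ℝ) : (l : ℂ) - z ≠ 0 := by
  intro h
  simpa [hz.ne'] using congrArg Complex.im h

lemma im_le_norm_ofReal_sub {z : ℂ} (hz : 0 < z.im) (l : ℝ) : z.im ≤ ‖(l : ℂ) - z‖ := by
  simpa [abs_of_pos hz] using Complex.abs_im_le_norm ((l : ℂ) - z)

lemma norm_inv_ofReal_sub_sub_le {z : ℂ} (hz : 0 < z.im) (l : ℝ) :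
    ‖((l : ℂ) - z)⁻¹ - ((l / (1 + l ^ 2) : ℝ) : ℂ)‖ ≤
      (‖1 + z ^ 2‖ / z.im + ‖z‖) * (1 / (1 + l ^ 2)) := by
  have hl : (0 : ℝ) < 1 + l ^ 2 := by positivity
  -- `1 + l z = (1 + z²) + z (l - z)`
  have heq : ((l : ℂ) - z)⁻¹ - ((l / (1 + l ^ 2) : ℝ) : ℂ) =
      ((1 + z ^ 2) / ((l : ℂ) - z) + z) * ((1 / (1 + l ^ 2) : ℝ) : ℂ) := by
    have : ((1 + l ^ 2 : ℝ) : ℂ) ≠ 0 := by exact_mod_cast hl.ne'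
    push_cast at this ⊢
    field_simp [ofReal_sub_ne_zero hz l]
    ring
  rw [heq, norm_mul, Complex.norm_real, Real.norm_of_nonneg (by positivity)]
  gcongr
  refine (norm_add_le _ _).trans (add_le_add_left ?_ _)
  rw [norm_div]
  exact div_le_div_of_nonneg_left (norm_nonneg _) hz (im_le_norm_ofReal_sub hz l)

lemma integrable_inv_ofReal_sub_sub {ω : Measure ℝ}
    (hω : Integrable (fun l : ℝ => 1 / (1 + l ^ 2)) ω) {z : ℂ} (hz : 0 < z.im) :
    Integrable (fun l : ℝ => ((l : ℂ) - z)⁻¹ - ((l / (1 + l ^ 2) : ℝ) : ℂ)) ω :=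
  (hω.const_mul _).mono' (by fun_prop)
    (Eventually.of_forall (norm_inv_ofReal_sub_sub_le hz))

lemma im_inv_ofReal_sub (l x ε : ℝ) :
    (((l : ℂ) - (x + ε * Complex.I))⁻¹).im = ε / ((l - x) ^ 2 + ε ^ 2) := by
  simp only [Complex.inv_im, Complex.sub_im, Complex.ofReal_im, Complex.add_im, Complex.mul_im,
    Complex.ofReal_re, Complex.I_im, mul_one, Complex.I_re, mul_zero, add_zero, zero_add, zero_sub,
    neg_neg, Complex.normSq_apply, Complex.sub_re, Complex.add_re, Complex.mul_re, sub_self,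
    mul_neg, neg_mul]
  ring

lemma im_eq_add_integral_poisson_kernel {ω : Measure ℝ} {c d : ℝ}
    (hω : Integrable (fun l : ℝ => 1 / (1 + l ^ 2)) ω) {m : ℂ → ℂ}
    (hm : ∀ z : ℂ, 0 < z.im →
      m z = (c : ℂ) + (d : ℂ) * z +
        ∫ l : ℝ, (((l : ℂ) - z)⁻¹ - ((l / (1 + l ^ 2) : ℝ) : ℂ)) ∂ω)
    {ε : ℝ} (hε : 0 < ε) (x : ℝ) :
    (m (x + ε * Complex.I)).im = d * ε + ∫ l, ε / ((l - x) ^ 2 + ε ^ 2) ∂ω := by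
  have hz : 0 < ((x : ℂ) + ε * Complex.I).im := by simpa using hε
  have him := Complex.imCLM.integral_comp_comm (integrable_inv_ofReal_sub_sub hω hz)
  simp only [Complex.imCLM_apply, Complex.sub_im, im_inv_ofReal_sub, Complex.ofReal_im,
    sub_zero] at him
  rw [hm _ hz, Complex.add_im, ← him]
  simp

lemma tendsto_integral_im_of_nevanlinna {ω : Measure ℝ} {c d : ℝ}
    (hω : Integrable (fun l : ℝ => 1 / (1 + l ^ 2)) ω) {m : ℂ → ℂ}
    (hm : ∀ z : ℂ, 0 < z.im →
      m z = (c : ℂ) + (d : ℂ) * z +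
        ∫ l : ℝ, (((l : ℂ) - z)⁻¹ - ((l / (1 + l ^ 2) : ℝ) : ℂ)) ∂ω)
    {a b : ℝ} (hab : a < b) :
    Tendsto (fun ε : ℝ => (1 / π) * ∫ x in a..b, (m ((x : ℂ) + ε * Complex.I)).im) (𝓝[>] 0)
      (𝓝 ((ω.real (Ioo a b) + ω.real (Icc a b)) / 2)) := by
  have := isFiniteMeasureOnCompacts_of_integrable hω
  have hint : ∀ ε : ℝ, 0 < ε → ∫ x in a..b, (m ((x : ℂ) + ε * Complex.I)).im =
      (b - a) * (d * ε) + ∫ l, (arctan ((b - l) / ε) - arctan ((a - l) / ε)) ∂ω := by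
    intro ε hε
    have hprod := integrable_poisson_kernel_prod hω hε a b
    have hinner : IntervalIntegrable (fun x => ∫ l, ε / ((l - x) ^ 2 + ε ^ 2) ∂ω) volume a b :=
      intervalIntegrable_iff.2 hprod.integral_prod_left
    simp_rw [im_eq_add_integral_poisson_kernel hω hm hε]
    rw [intervalIntegral.integral_add intervalIntegrable_const hinner,
      intervalIntegral.integral_const, smul_eq_mul, intervalIntegral_integral_swap hprod]
    simp_rw [integral_poisson_kernel hε]
  have hlim : Tendsto (fun ε => (1 / π) * ((b - a) * (d * ε) +
      ∫ l, (arctan ((b - l) / ε) - arctan ((a - l) / ε)) ∂ω)) (𝓝[>] 0)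
      (𝓝 ((ω.real (Ioo a b) + ω.real (Icc a b)) / 2)) := by
    convert (((tendsto_nhdsWithin_of_tendsto_nhds ((continuous_const_mul d).tendsto 0)).const_mul
      (b - a)).add (tendsto_integral_arctan_sub_arctan hω hab)).const_mul (1 / π) using 2
    field_simp
    ring
  refine hlim.congr' ?_
  filter_upwards [self_mem_nhdsWithin] with ε hε
  rw [hint ε hε]

lemma tendsto_measure_Ioc_add_right {μ : Measure ℝ} [IsFiniteMeasureOnCompacts μ] (a b : ℝ) :
    Tendsto (fun δ => μ (Ioc a (b + δ))) (𝓝[>] 0) (𝓝 (μ (Ioc a b))) := by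
  have hinter : ⋂ δ > (0 : ℝ), Ioc a (b + δ) = Ioc a b := by
    ext x
    simp only [mem_iInter, mem_Ioc]
    refine ⟨fun h => ⟨(h 1 one_pos).1, le_of_forall_pos_le_add fun δ hδ => (h δ hδ).2⟩, ?_⟩
    rintro ⟨h1, h2⟩ δ hδ
    exact ⟨h1, by linarith⟩
  rw [← hinter]
  exact tendsto_measure_biInter_gt (fun _ _ => measurableSet_Ioc.nullMeasurableSet)
    (fun r s _ hrs => Ioc_subset_Ioc_right (by linarith)) ⟨1, one_pos, measure_Ioc_lt_top.ne⟩

lemma tendsto_measureReal_of_Ioc_subset {μ : Measure ℝ} [IsFiniteMeasureOnCompacts μ] {a b : ℝ}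
    {s : ℝ → Set ℝ} (hs : ∀ δ > 0, Ioc (a + δ) b ⊆ s δ ∧ s δ ⊆ Ioc a (b + δ)) :
    Tendsto (fun δ => μ.real (s δ)) (𝓝[>] 0) (𝓝 (μ.real (Ioc a b))) := by
  have hupper : Tendsto (fun δ => μ.real (Ioc a (b + δ))) (𝓝[>] 0) (𝓝 (μ.real (Ioc a b))) :=
    (ENNReal.tendsto_toReal measure_Ioc_lt_top.ne).comp (tendsto_measure_Ioc_add_right a b)
  have hleft : Tendsto (fun δ => μ.real (Ioc a (a + δ))) (𝓝[>] 0) (𝓝 (μ.real (Ioc a a))) :=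
    (ENNReal.tendsto_toReal measure_Ioc_lt_top.ne).comp (tendsto_measure_Ioc_add_right a a)
  rw [Ioc_self, measureReal_empty] at hleft
  refine tendsto_of_tendsto_of_tendsto_of_le_of_le' (by simpa using tendsto_const_nhds.sub hleft)
    hupper ?_ ?_
  · filter_upwards [self_mem_nhdsWithin] with δ hδ
    have hcover : Ioc a b ⊆ s δ ∪ Ioc a (a + δ) := fun x hx => by
      by_cases hxδ : x ≤ a + δ
      · exact Or.inr ⟨hx.1, hxδ⟩
      · exact Or.inl ((hs δ hδ).1 ⟨not_le.1 hxδ, hx.2⟩)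
    have hfin : μ (s δ ∪ Ioc a (a + δ)) ≠ ⊤ := (measure_union_lt_top
      ((measure_mono (hs δ hδ).2).trans_lt measure_Ioc_lt_top) measure_Ioc_lt_top).ne
    linarith [measureReal_mono hcover hfin, measureReal_union_le (μ := μ) (s δ) (Ioc a (a + δ))]
  · filter_upwards [self_mem_nhdsWithin] with δ hδ
    exact measureReal_mono (hs δ hδ).2 measure_Ioc_lt_top.ne

theorem stieltjes_inversion_general (ω : Measure ℝ) (c d : ℝ)
    (hω : Integrable (fun l : ℝ => 1 / (1 + l ^ 2)) ω)
    (m : ℂ → ℂ)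
    (hm : ∀ z : ℂ, 0 < z.im →
      m z = (c : ℂ) + (d : ℂ) * z +
        ∫ l : ℝ, (((l : ℂ) - z)⁻¹ - ((l / (1 + l ^ 2) : ℝ) : ℂ)) ∂ω)
    (lam1 lam2 : ℝ) (hlam : lam1 < lam2) :
    ∃ L : ℝ → ℝ,
      (∀ δ > 0, Tendsto (fun ε : ℝ =>
          (1 / Real.pi) * ∫ l in (lam1 + δ)..(lam2 + δ), (m ((l : ℂ) + ε * Complex.I)).im)
        (nhdsWithin 0 (Set.Ioi 0)) (nhds (L δ))) ∧
      Tendsto L (nhdsWithin 0 (Set.Ioi 0)) (nhds (ω (Set.Ioc lam1 lam2)).toReal) := by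
  have := isFiniteMeasureOnCompacts_of_integrable hω
  refine ⟨fun δ => (ω.real (Ioo (lam1 + δ) (lam2 + δ)) + ω.real (Icc (lam1 + δ) (lam2 + δ))) / 2,
    fun δ _ => tendsto_integral_im_of_nevanlinna hω hm (by linarith), ?_⟩
  have hIoo := tendsto_measureReal_of_Ioc_subset (μ := ω)
    (s := fun δ => Ioo (lam1 + δ) (lam2 + δ)) fun δ hδ =>
      ⟨fun x hx => ⟨hx.1, by linarith [hx.2]⟩, fun x hx => ⟨by linarith [hx.1], hx.2.le⟩⟩
  have hIcc := tendsto_measureReal_of_Ioc_subset (μ := ω)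
    (s := fun δ => Icc (lam1 + δ) (lam2 + δ)) fun δ hδ =>
      ⟨fun x hx => ⟨hx.1.le, by linarith [hx.2]⟩, fun x hx => ⟨by linarith [hx.1], hx.2⟩⟩
  have hmean := (hIoo.add hIcc).div_const 2
  rwa [add_self_div_two] at hmean

/-- Stieltjes inversion formula: the representing measure of a Herglotz function in
Nevanlinna representation is recovered from boundary values of `Im m`. -/
theorem stieltjes_inversion (ω : Measure ℝ) (c d : ℝ) (hd : 0 ≤ d)
    (hω : Integrable (fun l : ℝ => 1 / (1 + l ^ 2)) ω)
    (m : ℂ → ℂ)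
    (hm : ∀ z : ℂ, 0 < z.im →
      m z = (c : ℂ) + (d : ℂ) * z +
        ∫ l : ℝ, (((l : ℂ) - z)⁻¹ - ((l / (1 + l ^ 2) : ℝ) : ℂ)) ∂ω)
    (lam1 lam2 : ℝ) (hlam : lam1 < lam2) :
    ∃ L : ℝ → ℝ,
      (∀ δ > 0, Tendsto (fun ε : ℝ =>
          (1 / Real.pi) * ∫ l in (lam1 + δ)..(lam2 + δ), (m ((l : ℂ) + ε * Complex.I)).im)
        (nhdsWithin 0 (Set.Ioi 0)) (nhds (L δ))) ∧
      Tendsto L (nhdsWithin 0 (Set.Ioi 0)) (nhds (ω (Set.Ioc lam1 lam2)).toReal) :=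
  stieltjes_inversion_general ω c d hω m hm lam1 lam2 hlam
end

section
/- Let γ ≥ 1 and z ∈ ℂ. Then for every x > 0, the power series φ̃(z,x) = 2^{-γ} x^{1/2+γ} Σ_{k=0}^∞ (-z x²/4)^k / (k! · Γ(k+1+γ)) converges absolutely, the function x ↦ φ̃(z,x) satisfies -φ̃''(z,x) + ((γ² - 1/4)/x²) φ̃(z,x) = z φ̃(z,x) on (0,∞), for each fixed x > 0 the map z ↦ φ̃(z,x) is entire and real-valued for real z, and for every b > 0, ∫₀^b |φ̃(z,x)|² dx < ∞. -/
/-!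
`φ̃(z,x) = 2^{-γ} x^{1/2+γ} ₀F̃₁(; γ+1; -z x²/4)`, where `₀F̃₁(; b; ·)` is Mathlib's regularized
hypergeometric function `Complex.regularizedHGFun 0 {b}`, an entire function. Differentiating
`₀F̃₁(; b; ·)` raises `b` by one. In `-φ̃''` the terms in `x^{γ-3/2}` cancel against the potential
since `(γ + 1/2)(γ - 1/2) = γ² - 1/4`, and the remaining ones equal `z φ̃` by the contiguous
relation `b ₀F̃₁(; b+1; w) + w ₀F̃₁(; b+2; w) = ₀F̃₁(; b; w)`, which comes from
`1/Γ(s) = s/Γ(s+1)`. Since `1/2 + γ ≥ 0`, `φ̃(z,·)` is continuous on all of `ℝ`, hence square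
integrable on bounded intervals.
-/

open MeasureTheory Set

noncomputable def phiTilde (γ : ℝ) (z : ℂ) (x : ℝ) : ℂ :=
  (((2 : ℝ) ^ (-γ) * x ^ ((1 : ℝ) / 2 + γ) : ℝ) : ℂ) *
    ∑' k : ℕ, (-z * (x : ℂ) ^ 2 / 4) ^ k /
      ((Nat.factorial k : ℂ) * ((Real.Gamma ((k : ℝ) + 1 + γ) : ℝ) : ℂ))

open scoped Nat

theorem FormalMultilinearSeries.hasDerivAt_ofScalarsSum {𝕜 : Type*}
    [NontriviallyNormedField 𝕜] [CompleteSpace 𝕜] {c : ℕ → 𝕜} {w : 𝕜}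
    (hw : ‖w‖ₑ < (ofScalars 𝕜 c).radius) :
    HasDerivAt (ofScalarsSum c) (ofScalarsSum (fun n ↦ (n + 1) * c (n + 1)) w) w := by
  set p := ofScalars 𝕜 c
  have hp : HasFPowerSeriesOnBall p.sum p 0 p.radius := p.hasFPowerSeriesOnBall (pos_of_gt hw)
  have hw' : w ∈ Metric.eball (0 : 𝕜) p.radius := by simpa using hw
  have hderiv : HasSum (fun n ↦ p.derivSeries n (fun _ ↦ w) 1) (deriv p.sum w) := by
    simpa using (hp.fderiv.hasSum (by simpa using hw')).mapL (ContinuousLinearMap.apply 𝕜 𝕜 1)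
  suffices h : ofScalarsSum (fun n ↦ (n + 1) * c (n + 1)) w = deriv p.sum w by
    rw [h]
    exact (hp.analyticAt_of_mem hw').differentiableAt.hasDerivAt
  rw [ofScalars_sum_eq, ← hderiv.tsum_eq]
  refine tsum_congr fun n ↦ ?_
  rw [apply_eq_pow_smul_coeff]
  simp [p, smul_eq_mul, mul_comm]

namespace Complex

open FormalMultilinearSeries

variable (b : ℂ)

lemma regularizedHGFunCoeff_zero_singleton (n : ℕ) :
    regularizedHGFunCoeff 0 {b} n = ((n ! : ℂ) * Gamma (b + n))⁻¹ := by
  simp [regularizedHGFunCoeff]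

lemma succ_mul_regularizedHGFunCoeff_zero_singleton (n : ℕ) :
    (n + 1) * regularizedHGFunCoeff 0 {b} (n + 1) = regularizedHGFunCoeff 0 {b + 1} n := by
  simp only [regularizedHGFunCoeff_zero_singleton, Nat.factorial_succ, Nat.cast_mul, mul_inv]
  rw [show b + ↑(n + 1) = b + 1 + n by push_cast; ring]
  push_cast
  field_simp

lemma add_mul_regularizedHGFunCoeff_zero_singleton_add_one (n : ℕ) :
    (b + n) * regularizedHGFunCoeff 0 {b + 1} n = regularizedHGFunCoeff 0 {b} n := by
  simp only [regularizedHGFunCoeff_zero_singleton, mul_inv]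
  rw [one_div_Gamma_eq_self_mul_one_div_Gamma_add_one (b + n), add_right_comm]
  ring

lemma radius_regularizedHGFunSeries_zero_singleton :
    (regularizedHGFunSeries 0 {b}).radius = ⊤ :=
  radius_regularizedHGFunSeries_eq_top (by simp)

lemma hasSum_regularizedHGFun_zero_singleton (w : ℂ) :
    HasSum (fun n ↦ regularizedHGFunCoeff 0 {b} n * w ^ n) (regularizedHGFun 0 {b} w) := by
  have h := (regularizedHGFunSeries 0 {b}).hasSum
    (x := w) (by simp [radius_regularizedHGFunSeries_zero_singleton])
  simp only [regularizedHGFunSeries, ofScalars_apply_eq, smul_eq_mul] at h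
  exact h

lemma summable_norm_regularizedHGFunCoeff_zero_singleton_mul_pow (w : ℂ) :
    Summable (fun n ↦ ‖regularizedHGFunCoeff 0 {b} n * w ^ n‖) := by
  simpa [regularizedHGFunSeries, ofScalars_apply_eq, mul_comm] using
    (regularizedHGFunSeries 0 {b}).summable_norm_apply
      (x := w) (by simp [radius_regularizedHGFunSeries_zero_singleton])

lemma hasDerivAt_regularizedHGFun_zero_singleton (w : ℂ) :
    HasDerivAt (regularizedHGFun 0 {b}) (regularizedHGFun 0 {b + 1} w) w := by
  have h := hasDerivAt_ofScalarsSum (c := regularizedHGFunCoeff 0 {b}) (w := w)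
    (by rw [← regularizedHGFunSeries, radius_regularizedHGFunSeries_zero_singleton]; simp)
  simp only [succ_mul_regularizedHGFunCoeff_zero_singleton] at h
  exact h

lemma differentiable_regularizedHGFun_zero_singleton :
    Differentiable ℂ (regularizedHGFun 0 {b}) :=
  fun w ↦ (hasDerivAt_regularizedHGFun_zero_singleton b w).differentiableAt

lemma regularizedHGFun_zero_singleton_contiguous (w : ℂ) :
    b * regularizedHGFun 0 {b + 1} w + w * regularizedHGFun 0 {b + 1 + 1} w =
      regularizedHGFun 0 {b} w := by
  have hshift : HasSum (fun n : ℕ ↦ n * regularizedHGFunCoeff 0 {b + 1} n * w ^ n)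
      (w * regularizedHGFun 0 {b + 1 + 1} w) := by
    rw [← hasSum_nat_add_iff' 1]
    simp only [Finset.range_one, Finset.sum_singleton, Nat.cast_zero, zero_mul, sub_zero]
    refine ((hasSum_regularizedHGFun_zero_singleton (b + 1 + 1) w).mul_left w).congr_fun
      fun n ↦ ?_
    rw [← succ_mul_regularizedHGFunCoeff_zero_singleton (b + 1) n]
    push_cast
    ring
  refine (((hasSum_regularizedHGFun_zero_singleton (b + 1) w).mul_left b).add hshift).unique <|
    (hasSum_regularizedHGFun_zero_singleton b w).congr_fun fun n ↦ ?_
  rw [← add_mul_regularizedHGFunCoeff_zero_singleton_add_one b n]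
  ring

end Complex

open Complex

lemma hasDerivAt_rpow_mul_comp_sq {G G' : ℂ → ℂ} (hG : ∀ w, HasDerivAt G (G' w) w) (a : ℝ)
    (z : ℂ) {x : ℝ} (hx : 0 < x) :
    HasDerivAt (fun y : ℝ ↦ ((y ^ a : ℝ) : ℂ) * G (-z * y ^ 2 / 4))
      (a * (((x ^ (a - 1) : ℝ) : ℂ) * G (-z * x ^ 2 / 4)) -
        z / 2 * (((x ^ (a + 1) : ℝ) : ℂ) * G' (-z * x ^ 2 / 4))) x := by
  have hpow : HasDerivAt (fun y : ℝ ↦ ((y ^ a : ℝ) : ℂ)) ((a * x ^ (a - 1) : ℝ) : ℂ) x :=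
    (Real.hasDerivAt_rpow_const (Or.inl hx.ne')).ofReal_comp
  have harg : HasDerivAt (fun y : ℝ ↦ -z * (y : ℂ) ^ 2 / 4) (-z * x / 2) x := by
    convert (((hasDerivAt_pow 2 (x : ℂ)).const_mul (-z)).div_const 4).comp_ofReal using 1
    ring
  refine (hpow.mul ((hG _).comp x harg)).congr_deriv ?_
  rw [Function.comp_apply, Real.rpow_add_one hx.ne']
  push_cast
  ring

lemma pow_div_factorial_mul_Gamma_eq_regularizedHGFunCoeff (γ : ℝ) (w : ℂ) (k : ℕ) :
    w ^ k / ((k ! : ℂ) * ((Real.Gamma ((k : ℝ) + 1 + γ) : ℝ) : ℂ)) =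
      regularizedHGFunCoeff 0 {(γ : ℂ) + 1} k * w ^ k := by
  rw [regularizedHGFunCoeff_zero_singleton, ← Gamma_ofReal]
  push_cast
  ring_nf

lemma phiTilde_eq_regularizedHGFun (γ : ℝ) (z : ℂ) (x : ℝ) :
    phiTilde γ z x = (((2 : ℝ) ^ (-γ) : ℝ) : ℂ) * ((x ^ ((1 : ℝ) / 2 + γ) : ℝ) : ℂ) *
      regularizedHGFun 0 {(γ : ℂ) + 1} (-z * x ^ 2 / 4) := by
  simp_rw [phiTilde, pow_div_factorial_mul_Gamma_eq_regularizedHGFunCoeff,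
    (hasSum_regularizedHGFun_zero_singleton _ _).tsum_eq]
  push_cast
  ring

lemma hasDerivAt_phiTilde (γ : ℝ) (z : ℂ) {x : ℝ} (hx : 0 < x) :
    HasDerivAt (phiTilde γ z)
      ((((2 : ℝ) ^ (-γ) : ℝ) : ℂ) *
        ((1 / 2 + γ : ℝ) * (((x ^ ((1 : ℝ) / 2 + γ - 1) : ℝ) : ℂ) *
            regularizedHGFun 0 {(γ : ℂ) + 1} (-z * x ^ 2 / 4)) -
          z / 2 * (((x ^ ((1 : ℝ) / 2 + γ + 1) : ℝ) : ℂ) *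
            regularizedHGFun 0 {(γ : ℂ) + 1 + 1} (-z * x ^ 2 / 4)))) x := by
  have h := (hasDerivAt_rpow_mul_comp_sq
    (hasDerivAt_regularizedHGFun_zero_singleton ((γ : ℂ) + 1)) (1 / 2 + γ) z hx).const_mul
    (((2 : ℝ) ^ (-γ) : ℝ) : ℂ)
  rwa [show phiTilde γ z = _ from
    funext fun y ↦ (phiTilde_eq_regularizedHGFun γ z y).trans (mul_assoc _ _ _)]

theorem phiTilde_schrodinger (γ : ℝ) (z : ℂ) {x : ℝ} (hx : 0 < x) :
    -deriv (deriv (phiTilde γ z)) x + (((γ ^ 2 - 1 / 4) / x ^ 2 : ℝ) : ℂ) * phiTilde γ z x =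
      z * phiTilde γ z x := by
  have hderiv := (eventually_gt_nhds hx).mono fun y hy ↦ (hasDerivAt_phiTilde γ z hy).deriv
  have hF0 := hasDerivAt_rpow_mul_comp_sq
    (hasDerivAt_regularizedHGFun_zero_singleton ((γ : ℂ) + 1)) (1 / 2 + γ - 1) z hx
  have hF1 := hasDerivAt_rpow_mul_comp_sq
    (hasDerivAt_regularizedHGFun_zero_singleton ((γ : ℂ) + 1 + 1)) (1 / 2 + γ + 1) z hx
  have hderiv2 := ((hF0.const_mul ((1 / 2 + γ : ℝ) : ℂ)).fun_sub (hF1.const_mul (z / 2))).const_mul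
    (((2 : ℝ) ^ (-γ) : ℝ) : ℂ)
  rw [Filter.EventuallyEq.deriv_eq hderiv, hderiv2.deriv, phiTilde_eq_regularizedHGFun]
  have hrel := regularizedHGFun_zero_singleton_contiguous (γ + 1) (-z * x ^ 2 / 4)
  simp only [sub_add_cancel, add_sub_cancel_right, Real.rpow_sub_one hx.ne',
    Real.rpow_add_one hx.ne']
  push_cast
  linear_combination
    (((2 : ℝ) ^ (-γ) : ℝ) : ℂ) * (((x ^ ((1 : ℝ) / 2 + γ) : ℝ) : ℂ)) * z * hrel

lemma differentiable_phiTilde_param (γ x : ℝ) :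
    Differentiable ℂ (fun w : ℂ ↦ phiTilde γ w x) := by
  simp_rw [phiTilde_eq_regularizedHGFun]
  exact ((differentiable_regularizedHGFun_zero_singleton _).comp
    ((differentiable_id.neg.mul_const _).div_const _)).const_mul _

lemma im_phiTilde_ofReal (γ t x : ℝ) : (phiTilde γ t x).im = 0 := by
  have h : phiTilde γ t x = ((2 ^ (-γ) * x ^ ((1 : ℝ) / 2 + γ) *
      ∑' k : ℕ, (-t * x ^ 2 / 4) ^ k / (k ! * Real.Gamma (k + 1 + γ)) : ℝ) : ℂ) := by
    simp [phiTilde, ofReal_tsum]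
  rw [h, ofReal_im]

lemma continuous_phiTilde {γ : ℝ} (hγ : -(1 / 2) ≤ γ) (z : ℂ) : Continuous (phiTilde γ z) := by
  rw [show phiTilde γ z = _ from funext (phiTilde_eq_regularizedHGFun γ z)]
  exact (continuous_const.mul (continuous_ofReal.comp
    (Real.continuous_rpow_const (by linarith)))).mul
    ((differentiable_regularizedHGFun_zero_singleton _).continuous.comp (by fun_prop))

/-- The series defining `φ̃(z,·)` converges absolutely, `φ̃(z,·)` solves the
Schrödinger equation with potential `(γ²-1/4)/x²` on `(0,∞)`, is entire in `z`,
real-valued for real `z`, and square-integrable near `0`. -/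
theorem phiTilde_weyl_solution (γ : ℝ) (hγ : 1 ≤ γ) (z : ℂ) :
    (∀ x : ℝ, 0 < x →
      Summable (fun k : ℕ => ‖(-z * (x : ℂ) ^ 2 / 4) ^ k /
        ((Nat.factorial k : ℂ) * ((Real.Gamma ((k : ℝ) + 1 + γ) : ℝ) : ℂ))‖)) ∧
    (∀ x : ℝ, 0 < x →
      -deriv (deriv (phiTilde γ z)) x +
        (((γ ^ 2 - 1 / 4) / x ^ 2 : ℝ) : ℂ) * phiTilde γ z x = z * phiTilde γ z x) ∧
    (∀ x : ℝ, 0 < x → Differentiable ℂ (fun w : ℂ => phiTilde γ w x)) ∧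
    (∀ x : ℝ, 0 < x → ∀ t : ℝ, (phiTilde γ (t : ℂ) x).im = 0) ∧
    (∀ b : ℝ, 0 < b →
      IntegrableOn (fun x : ℝ => ‖phiTilde γ z x‖ ^ 2) (Ioc 0 b)) := by
  refine ⟨fun x _ ↦ ?_, fun x hx ↦ phiTilde_schrodinger γ z hx,
    fun x _ ↦ differentiable_phiTilde_param γ x, fun x _ t ↦ im_phiTilde_ofReal γ t x,
    fun b _ ↦ ((continuous_phiTilde (by linarith) z).norm.pow 2).integrableOn_Ioc⟩
  simpa only [pow_div_factorial_mul_Gamma_eq_regularizedHGFunCoeff] using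
    summable_norm_regularizedHGFunCoeff_zero_singleton_mul_pow _ (-z * (x : ℂ) ^ 2 / 4)
end

section
/- Let γ ≥ 1, b > 0, and let Ṽ : (0,b) → ℝ be measurable with ∫₀^b t·|Ṽ(t)| dt < ∞. Define recursively θ₀(x) = x^{1/2-γ} and θ_k(x) = (1/(2γ)) ∫_{x₀}^x [x^{1/2+γ} t^{1/2-γ} - x^{1/2-γ} t^{1/2+γ}] Ṽ(t) θ_{k-1}(t) dt for k ≥ 1 and x₀ ∈ (0,b). Then for all x ∈ (0,x₀) and k ≥ 0, |θ_k(x)| ≤ x^{1/2-γ} · (1/k!) · ((1/(2γ)) ∫₀^{x₀} t|Ṽ(t)| dt)^k. -/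
open MeasureTheory Set intervalIntegral

/-!
For `0 < x ≤ t` the Volterra kernel is bounded by `x^{1/2-γ} t^{1/2+γ}`, and `t^{1/2+γ}` cancels
the factor `t^{1/2-γ}` carried by `θ_k(t)`. Induction then gives the sharper bound
`|θ_k(x)| ≤ x^{1/2-γ} (c A(x))^k / k!` with the tail integral `A(x) = ∫_x^{x₀} t|Ṽ(t)| dt` and
`c = 1/(2γ)`; the factorial comes from `∫_x^{x₀} t|Ṽ(t)| A(t)^k dt = A(x)^{k+1}/(k+1)`, the
fundamental theorem of calculus for the absolutely continuous function `A^{k+1}`.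
-/

theorem AbsolutelyContinuousOnInterval.fun_pow_succ {f : ℝ → ℝ} {a b : ℝ}
    (hf : AbsolutelyContinuousOnInterval f a b) (n : ℕ) :
    AbsolutelyContinuousOnInterval (fun x => f x ^ (n + 1)) a b := by
  induction n with
  | zero => simpa using hf
  | succ n ih => simpa only [← pow_succ] using ih.fun_mul hf

theorem integral_mul_pow_integral_eq {f : ℝ → ℝ} {a b : ℝ}
    (hf : IntervalIntegrable f volume a b) (k : ℕ) :
    ∫ t in a..b, f t * (∫ s in t..b, f s) ^ k = (∫ s in a..b, f s) ^ (k + 1) / (k + 1) := by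
  set T : ℝ → ℝ := fun t => ∫ s in t..b, f s
  have hT : T = fun t => -∫ s in b..t, f s := funext fun t => integral_symm b t
  have hT_ac : AbsolutelyContinuousOnInterval T a b := by
    rw [hT]
    exact (hf.absolutelyContinuousOnInterval_intervalIntegral right_mem_uIcc).neg
  have hderiv : ∀ᵐ t, t ∈ uIoc a b →
      deriv (fun t => T t ^ (k + 1)) t = -((k + 1) * (f t * T t ^ k)) := by
    filter_upwards [hf.ae_hasDerivAt_integral] with t ht htab
    have hTt : HasDerivAt T (-f t) t := by
      rw [hT]; exact (ht (uIoc_subset_uIcc htab) b right_mem_uIcc).neg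
    rw [(hTt.fun_pow (k + 1)).deriv]
    push_cast
    ring
  have hftc := (hT_ac.fun_pow_succ k).integral_deriv_eq_sub
  rw [integral_congr_ae hderiv, intervalIntegral.integral_neg,
    intervalIntegral.integral_const_mul] at hftc
  simp only [T, integral_same] at hftc
  field_simp
  linear_combination -hftc

theorem abs_rpow_mul_rpow_sub_le {p q x t : ℝ} (hpq : p ≤ q) (hx : 0 < x) (hxt : x ≤ t) :
    |x ^ q * t ^ p - x ^ p * t ^ q| ≤ x ^ p * t ^ q := by
  have ht : 0 < t := hx.trans_le hxt
  have hsplit : ∀ y : ℝ, 0 < y → y ^ q = y ^ p * y ^ (q - p) := fun y hy => by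
    rw [← Real.rpow_add hy, add_sub_cancel]
  have hle : x ^ q * t ^ p ≤ x ^ p * t ^ q := by
    rw [hsplit x hx, hsplit t ht, mul_right_comm, mul_assoc (x ^ p)]
    gcongr
  exact abs_sub_le_of_nonneg_of_le (by positivity) hle (by positivity) le_rfl

theorem abs_volterra_iterate_le {γ x₀ : ℝ} {V : ℝ → ℝ} {θ : ℕ → ℝ → ℝ} (hγ : 0 ≤ γ)
    (hint : IntegrableOn (fun t => t * |V t|) (Ioc 0 x₀))
    (hθ0 : ∀ x : ℝ, θ 0 x = x ^ ((1 : ℝ) / 2 - γ))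
    (hθ : ∀ (k : ℕ) (x : ℝ), θ (k + 1) x = (1 / (2 * γ)) *
      ∫ t in x₀..x,
        (x ^ ((1 : ℝ) / 2 + γ) * t ^ ((1 : ℝ) / 2 - γ) -
          x ^ ((1 : ℝ) / 2 - γ) * t ^ ((1 : ℝ) / 2 + γ)) * V t * θ k t)
    (k : ℕ) {x : ℝ} (hx : x ∈ Ioc 0 x₀) :
    |θ k x| ≤ x ^ ((1 : ℝ) / 2 - γ) *
      ((1 / (2 * γ)) * ∫ t in x..x₀, t * |V t|) ^ k / (Nat.factorial k : ℝ) := by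
  set p : ℝ := 1 / 2 - γ
  set q : ℝ := 1 / 2 + γ
  set c : ℝ := 1 / (2 * γ)
  set A : ℝ → ℝ := fun y => ∫ t in y..x₀, t * |V t|
  induction k generalizing x with
  | zero => simp [hθ0, abs_of_pos (Real.rpow_pos_of_pos hx.1 p)]
  | succ k ih =>
    obtain ⟨hx0, hxx₀⟩ := hx
    have hw : IntervalIntegrable (fun t => t * |V t|) volume x x₀ :=
      (intervalIntegrable_iff_integrableOn_Ioc_of_le hxx₀).2
        (hint.mono_set (Ioc_subset_Ioc_left hx0.le))
    have hA : ContinuousOn A (uIcc x x₀) :=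
      continuousOn_primitive_interval_left
        ((intervalIntegrable_iff_integrableOn_Icc_of_le hxx₀).1 hw |>.mono_set
          (uIcc_of_le hxx₀).subset)
    have hbound : ∀ t ∈ Ioc x x₀,
        ‖(x ^ q * t ^ p - x ^ p * t ^ q) * V t * θ k t‖ ≤
          x ^ p * c ^ k / (Nat.factorial k : ℝ) * (t * |V t| * A t ^ k) := by
      intro t ht
      have ht0 : 0 < t := hx0.trans ht.1
      have htt : t ^ q * t ^ p = t := by
        rw [← Real.rpow_add ht0]; norm_num [p, q]
      calc ‖(x ^ q * t ^ p - x ^ p * t ^ q) * V t * θ k t‖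
          ≤ x ^ p * t ^ q * |V t| * (t ^ p * (c * A t) ^ k / (Nat.factorial k : ℝ)) := by
            rw [Real.norm_eq_abs, abs_mul, abs_mul]
            gcongr
            · exact abs_rpow_mul_rpow_sub_le (by linarith) hx0 ht.1.le
            · exact ih ⟨ht0, ht.2⟩
        _ = x ^ p * c ^ k / (Nat.factorial k : ℝ) * ((t ^ q * t ^ p) * |V t| * A t ^ k) := by
            ring
        _ = _ := by rw [htt]
    have hint_bound : IntervalIntegrable
        (fun t => x ^ p * c ^ k / (Nat.factorial k : ℝ) * (t * |V t| * A t ^ k)) volume x x₀ :=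
      ((hw.mul_continuousOn (hA.pow k)).const_mul _)
    have hest :=
      norm_integral_le_of_norm_le hxx₀ (Filter.Eventually.of_forall hbound) hint_bound
    rw [intervalIntegral.integral_const_mul, integral_mul_pow_integral_eq hw] at hest
    rw [hθ, integral_symm, abs_mul, abs_neg, ← Real.norm_eq_abs (∫ _ in x..x₀, _)]
    have hc : 0 ≤ c := by positivity
    calc |c| * ‖∫ t in x..x₀, (x ^ q * t ^ p - x ^ p * t ^ q) * V t * θ k t‖
        ≤ c * (x ^ p * c ^ k / (Nat.factorial k : ℝ) * (A x ^ (k + 1) / (k + 1))) := by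
          rw [abs_of_nonneg hc]; gcongr
      _ = x ^ p * (c * A x) ^ (k + 1) / (Nat.factorial (k + 1) : ℝ) := by
          rw [Nat.factorial_succ]; push_cast; field_simp; ring

theorem volterra_iteration_estimate_general (γ b x₀ : ℝ) (hγ : 1 ≤ γ)
    (hx₀ : x₀ ∈ Ioo 0 b) (V : ℝ → ℝ)
    (hint : IntegrableOn (fun t => t * |V t|) (Ioc 0 b))
    (θ : ℕ → ℝ → ℝ)
    (hθ0 : ∀ x : ℝ, θ 0 x = x ^ ((1 : ℝ) / 2 - γ))
    (hθ : ∀ (k : ℕ) (x : ℝ), θ (k + 1) x = (1 / (2 * γ)) *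
      ∫ t in x₀..x,
        (x ^ ((1 : ℝ) / 2 + γ) * t ^ ((1 : ℝ) / 2 - γ) -
          x ^ ((1 : ℝ) / 2 - γ) * t ^ ((1 : ℝ) / 2 + γ)) * V t * θ k t) :
    ∀ x ∈ Ioo 0 x₀, ∀ k : ℕ,
      |θ k x| ≤ x ^ ((1 : ℝ) / 2 - γ) * (1 / (Nat.factorial k : ℝ)) *
        ((1 / (2 * γ)) * ∫ t in (0 : ℝ)..x₀, t * |V t|) ^ k := by
  intro x ⟨hx0, hxx₀⟩ k
  have hint₀ : IntegrableOn (fun t => t * |V t|) (Ioc 0 x₀) :=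
    hint.mono_set (Ioc_subset_Ioc_right hx₀.2.le)
  have hw_nonneg : ∀ t ∈ Ioc (0 : ℝ) x₀, 0 ≤ t * |V t| := fun t ht =>
    mul_nonneg ht.1.le (abs_nonneg _)
  have htail_nonneg : 0 ≤ ∫ t in x..x₀, t * |V t| :=
    intervalIntegral.integral_nonneg hxx₀.le fun t ht => hw_nonneg t ⟨hx0.trans_le ht.1, ht.2⟩
  have htail_le : ∫ t in x..x₀, t * |V t| ≤ ∫ t in (0 : ℝ)..x₀, t * |V t| :=
    integral_mono_interval hx0.le hxx₀.le le_rfl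
      ((ae_restrict_iff' measurableSet_Ioc).2 (Filter.Eventually.of_forall hw_nonneg))
      ((intervalIntegrable_iff_integrableOn_Ioc_of_le (hx0.trans hxx₀).le).2 hint₀)
  calc |θ k x|
      ≤ x ^ ((1 : ℝ) / 2 - γ) *
          ((1 / (2 * γ)) * ∫ t in x..x₀, t * |V t|) ^ k / (Nat.factorial k : ℝ) :=
        abs_volterra_iterate_le (by linarith) hint₀ hθ0 hθ k ⟨hx0, hxx₀.le⟩
    _ ≤ x ^ ((1 : ℝ) / 2 - γ) *
          ((1 / (2 * γ)) * ∫ t in (0 : ℝ)..x₀, t * |V t|) ^ k / (Nat.factorial k : ℝ) := by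
        gcongr
    _ = _ := by ring

/-- Iteration estimate for the Volterra series of the limit-point analysis at `x = 0`:
`|θ_k(x)| ≤ x^{1/2-γ} (1/k!) ((1/(2γ)) ∫₀^{x₀} t|Ṽ(t)| dt)^k`. -/
theorem volterra_iteration_estimate (γ b x₀ : ℝ) (hγ : 1 ≤ γ) (hb : 0 < b)
    (hx₀ : x₀ ∈ Ioo 0 b) (V : ℝ → ℝ) (hmeas : Measurable V)
    (hint : IntegrableOn (fun t => t * |V t|) (Ioc 0 b))
    (θ : ℕ → ℝ → ℝ)
    (hθ0 : ∀ x : ℝ, θ 0 x = x ^ ((1 : ℝ) / 2 - γ))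
    (hθ : ∀ (k : ℕ) (x : ℝ), θ (k + 1) x = (1 / (2 * γ)) *
      ∫ t in x₀..x,
        (x ^ ((1 : ℝ) / 2 + γ) * t ^ ((1 : ℝ) / 2 - γ) -
          x ^ ((1 : ℝ) / 2 - γ) * t ^ ((1 : ℝ) / 2 + γ)) * V t * θ k t) :
    ∀ x ∈ Ioo 0 x₀, ∀ k : ℕ,
      |θ k x| ≤ x ^ ((1 : ℝ) / 2 - γ) * (1 / (Nat.factorial k : ℝ)) *
        ((1 / (2 * γ)) * ∫ t in (0 : ℝ)..x₀, t * |V t|) ^ k :=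
  volterra_iteration_estimate_general γ b x₀ hγ hx₀ V hint θ hθ0 hθ
end
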